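/- arXiv:1207.2430 — 3 statements merged into one kernel-verified Lean document; each statement's English description precedes it below -/
import Mathlib

section
/- For any finite graph G = (V,E), the evaluation D(G, −1) of the domination polynomial at −1 is an odd integer. -/
open Finset Polynomial

variable {V : Type*}

def dominates (H : SimpleGraph V) (W : Finset V) : Prop :=
  ∀ v : V, v ∈ W ∨ ∃ u ∈ W, H.Adj u v

open scoped Classical in
noncomputable def domPoly [Fintype V] (H : SimpleGraph V) : Polynomial ℤ :=
  ∑ W ∈ Finset.univ.powerset.filter (fun W => dominates H W), X ^ W.card

open scoped Classical in
noncomputable def compOrders [Fintype V] (H : SimpleGraph V) : Multiset ℕ :=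
  (Finset.univ : Finset H.ConnectedComponent).val.map (fun c => Nat.card c.supp)

/-! Count modulo 2 the pairs `(A, B)` of vertex sets with `B` disjoint from the closed
neighbourhood `N[A]`. For fixed `A` there are `2 ^ |V \ N[A]|` choices of `B`, an odd number
exactly when `A` dominates, so the count has the parity of the number of dominating sets. On the
other hand the condition is symmetric in `A` and `B`, and `(∅, ∅)` is the only admissible pair
with `A = B`; swapping is an involution with a single fixed point, so the count is odd. Finally
`D(G, -1) = ∑ (-1) ^ |W|` is congruent modulo 2 to the number of dominating sets. -/

theorem Finset.card_zmod_two_eq_card_fixed {α : Type*} [DecidableEq α] (s : Finset α) (g : α → α)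
    (hg : ∀ a ∈ s, g a ∈ s) (hgg : ∀ a ∈ s, g (g a) = a) :
    (#s : ZMod 2) = #{a ∈ s | g a = a} := by
  have hmoved : (#{a ∈ s | g a ≠ a} : ZMod 2) = 0 := by
    rw [cast_card]
    refine sum_involution (fun a _ ↦ g a) (fun _ _ ↦ by decide)
      (fun a ha _ ↦ (mem_filter.1 ha).2) (fun a ha ↦ ?_) (fun a ha ↦ hgg a (mem_filter.1 ha).1)
    obtain ⟨has, hne⟩ := mem_filter.1 ha
    exact mem_filter.2 ⟨hg a has, by rw [hgg a has]; exact hne.symm⟩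
  rw [← card_filter_add_card_filter_not (s := s) (fun a ↦ g a = a), Nat.cast_add, hmoved, add_zero]

namespace SimpleGraph

open scoped Classical

variable [Fintype V] (G : SimpleGraph V)

noncomputable def undominated (A : Finset V) : Finset V :=
  {v | v ∉ A ∧ ∀ u ∈ A, ¬G.Adj u v}

theorem dominates_iff_undominated_eq_empty (A : Finset V) :
    dominates G A ↔ undominated G A = ∅ := by
  simp [dominates, undominated, eq_empty_iff_forall_notMem, or_iff_not_imp_left]

theorem subset_undominated_comm (A B : Finset V) :
    B ⊆ undominated G A ↔ A ⊆ undominated G B := by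
  simp only [undominated, subset_iff, mem_filter, mem_univ, true_and]
  constructor <;> intro h x hx <;>
    exact ⟨fun hx' ↦ (h hx').1 hx, fun u hu hux ↦ (h hu).2 x hx hux.symm⟩

theorem subset_undominated_self_iff (A : Finset V) : A ⊆ undominated G A ↔ A = ∅ := by
  refine ⟨fun h ↦ eq_empty_of_forall_notMem fun x hx ↦ ?_, fun h ↦ h ▸ empty_subset _⟩
  exact (mem_filter.1 (h hx)).2.1 hx

noncomputable def separatedPairs : Finset (Finset V × Finset V) :=
  {p | p.2 ⊆ undominated G p.1}

theorem card_separatedPairs : #(separatedPairs G) = ∑ A, 2 ^ #(undominated G A) := by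
  rw [separatedPairs, card_filter, Fintype.sum_prod_type]
  refine sum_congr rfl fun A _ ↦ ?_
  rw [← card_powerset, ← filter_subset_univ, card_filter]

theorem card_separatedPairs_zmod_two_eq_card_dominating :
    (#(separatedPairs G) : ZMod 2) = #{A | dominates G A} := by
  rw [card_separatedPairs, card_filter, Nat.cast_sum, Nat.cast_sum]
  refine sum_congr rfl fun A _ ↦ ?_
  rw [dominates_iff_undominated_eq_empty, ← card_eq_zero]
  rcases Nat.eq_zero_or_pos #(undominated G A) with h | h
  · simp [h]
  · simp [h.ne', zero_pow h.ne', show (2 : ZMod 2) = 0 from rfl]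

theorem card_separatedPairs_zmod_two : (#(separatedPairs G) : ZMod 2) = 1 := by
  have hswap : ∀ p ∈ separatedPairs G, p.swap ∈ separatedPairs G := fun p hp ↦ by
    simpa [separatedPairs, subset_undominated_comm G p.1] using hp
  rw [card_zmod_two_eq_card_fixed _ Prod.swap hswap fun p _ ↦ p.swap_swap]
  suffices {p ∈ separatedPairs G | p.swap = p} = {(∅, ∅)} by simp [this]
  ext ⟨A, B⟩
  simp only [separatedPairs, mem_filter, mem_univ, true_and, Prod.swap_prod_mk, Prod.mk.injEq,
    mem_singleton]
  constructor
  · rintro ⟨h, rfl, -⟩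
    have hempty := (subset_undominated_self_iff G _).1 h
    exact ⟨hempty, hempty⟩
  · rintro ⟨rfl, rfl⟩
    exact ⟨empty_subset _, rfl, rfl⟩

theorem odd_card_dominating : Odd #{A | dominates G A} := by
  rw [← ZMod.natCast_eq_one_iff_odd, ← card_separatedPairs_zmod_two_eq_card_dominating,
    card_separatedPairs_zmod_two]

end SimpleGraph

/-- `D(G, -1)` is an odd integer. -/
theorem stmt_6 [Fintype V] (G : SimpleGraph V) :
    Odd ((domPoly G).eval (-1)) := by
  rw [← ZMod.intCast_eq_one_iff_odd, domPoly, eval_finsetSum, powerset_univ]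
  simpa using ZMod.natCast_eq_one_iff_odd.2 G.odd_card_dominating
end

section
/- Any connected graph G = (V,E) with nonempty vertex set satisfies ∑_{W ⊆ V} (−1)^{|W|} D(G[W], x) = 1 + (−x)^{|V|}, where G[W] is the subgraph of G induced by W. -/
open Finset Polynomial

variable {V : Type*}

/-! Expanding each `D(G[W], x)` over the sets `T ⊆ W` whose closed neighbourhood `N[T]` contains `W`
and exchanging the two sums, the coefficient of `x ^ |T|` becomes `∑_{T ⊆ W ⊆ N[T]} (-1) ^ |W|`,
which vanishes unless `N[T] = T`. In a connected graph only `∅` and `V` are closed under taking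
neighbours, and they contribute `1` and `(-x) ^ |V|`. -/

theorem Finset.sum_Icc_neg_one_pow_card {α R : Type*} [DecidableEq α] [Ring R]
    {s t : Finset α} (hst : s ⊆ t) :
    ∑ u ∈ Icc s t, (-1 : R) ^ #u = if t = s then (-1) ^ #s else 0 := by
  have hdisj : ∀ u ∈ (t \ s).powerset, Disjoint s u := fun u hu =>
    disjoint_sdiff.mono_right (mem_powerset.1 hu)
  have hinj : Set.InjOn (s ∪ ·) (t \ s).powerset := fun u hu v hv huv => by
    rw [← union_sdiff_cancel_left (hdisj u hu), ← union_sdiff_cancel_left (hdisj v hv)]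
    exact congrArg (· \ s) huv
  rw [Icc_eq_image_powerset hst, sum_image hinj]
  calc ∑ u ∈ (t \ s).powerset, (-1 : R) ^ #(s ∪ u)
      = (-1) ^ #s * ((∑ u ∈ (t \ s).powerset, (-1 : ℤ) ^ #u : ℤ) : R) := by
        push_cast
        rw [mul_sum]
        exact sum_congr rfl fun u hu => by rw [card_union_of_disjoint (hdisj u hu), pow_add]
    _ = if t = s then (-1) ^ #s else 0 := by
        rw [sum_powerset_neg_one_pow_card]
        rcases eq_or_ne t s with rfl | hne
        · simp
        · have hts : ¬t ⊆ s := fun h => hne (h.antisymm hst)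
          simp [hts, hne]

theorem SimpleGraph.Preconnected.eq_empty_or_univ_of_adj_mem [Fintype V] {G : SimpleGraph V}
    (hG : G.Preconnected) {s : Finset V} (hs : ∀ ⦃u v⦄, G.Adj u v → u ∈ s → v ∈ s) :
    s = ∅ ∨ s = univ := by
  refine s.eq_empty_or_nonempty.imp id fun ⟨v, hv⟩ => eq_univ_of_forall fun w => ?_
  induction (G.reachable_iff_reflTransGen v w).1 (hG v w) with
  | refl => exact hv
  | tail _ hadj ih => exact hs hadj ih

namespace SimpleGraph

section ClosedNbhd

open scoped Classical

variable [Fintype V] (G : SimpleGraph V)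

noncomputable def closedNbhdFinset (T : Finset V) : Finset V :=
  {v | v ∈ T ∨ ∃ u ∈ T, G.Adj u v}

variable {G}

theorem mem_closedNbhdFinset {T : Finset V} {v : V} :
    v ∈ G.closedNbhdFinset T ↔ v ∈ T ∨ ∃ u ∈ T, G.Adj u v := by
  simp [closedNbhdFinset]

theorem subset_closedNbhdFinset (T : Finset V) : T ⊆ G.closedNbhdFinset T :=
  fun _ hv => mem_closedNbhdFinset.2 (Or.inl hv)

theorem closedNbhdFinset_subset_iff {T : Finset V} :
    G.closedNbhdFinset T ⊆ T ↔ ∀ ⦃u v⦄, G.Adj u v → u ∈ T → v ∈ T := by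
  simp only [subset_iff, mem_closedNbhdFinset]
  exact ⟨fun h u v huv hu => h (Or.inr ⟨u, hu, huv⟩),
    fun h v => Or.rec id fun ⟨u, hu, huv⟩ => h huv hu⟩

theorem Preconnected.closedNbhdFinset_eq_self_iff (hG : G.Preconnected) {T : Finset V} :
    G.closedNbhdFinset T = T ↔ T = ∅ ∨ T = univ := by
  refine ⟨fun h => hG.eq_empty_or_univ_of_adj_mem (closedNbhdFinset_subset_iff.1 h.subset), ?_⟩
  rintro (rfl | rfl)
  · simp [closedNbhdFinset]
  · exact (subset_univ _).antisymm (subset_closedNbhdFinset _)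

end ClosedNbhd

end SimpleGraph

section InducedDomPoly

open scoped Classical

variable [Fintype V] {G : SimpleGraph V}

theorem dominates_induce_iff {W : Finset V} {T : Finset W} :
    dominates (G.induce (W : Set V)) T ↔
      W ⊆ G.closedNbhdFinset (T.map (Function.Embedding.subtype _)) := by
  simp +contextual [dominates, subset_iff, SimpleGraph.mem_closedNbhdFinset]

theorem domPoly_induce (W : Finset V) :
    domPoly (G.induce (W : Set V)) = ∑ T ∈ W.powerset with W ⊆ G.closedNbhdFinset T, X ^ #T := by
  rw [domPoly]
  refine sum_nbij' (·.map (Function.Embedding.subtype _)) (·.subtype (· ∈ W))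
    (fun T hT => ?_) (fun T hT => ?_) (fun T _ => ?_) (fun T hT => ?_) (fun T _ => by rw [card_map])
  · simp only [mem_filter, mem_powerset] at hT ⊢
    exact ⟨fun v hv => property_of_mem_map_subtype T hv, dominates_induce_iff.1 hT.2⟩
  · simp only [mem_filter, mem_powerset] at hT ⊢
    refine ⟨subset_univ _, dominates_induce_iff.2 ?_⟩
    rw [subtype_map_of_mem hT.1]
    exact hT.2
  · ext v
    simp
  · simp only [mem_filter, mem_powerset] at hT
    exact subtype_map_of_mem hT.1

end InducedDomPoly

theorem stmt_8_general [Fintype V] (G : SimpleGraph V) (hConn : G.Connected) :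
    ∑ W ∈ (Finset.univ : Finset V).powerset,
        (-1 : Polynomial ℤ) ^ W.card * domPoly (G.induce (↑W : Set V))
      = 1 + (-X) ^ Fintype.card V := by
  classical
  calc _
      = ∑ W ∈ univ.powerset, ∑ T ∈ W.powerset with W ⊆ G.closedNbhdFinset T,
          (-1) ^ #W * X ^ #T := by
        simp_rw [domPoly_induce, mul_sum]
    _ = ∑ T ∈ univ.powerset, ∑ W ∈ Icc T (G.closedNbhdFinset T), (-1) ^ #W * X ^ #T :=
        sum_comm' fun W T => by simp
    _ = ∑ T ∈ univ.powerset with G.closedNbhdFinset T = T, (-X) ^ #T := by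
        simp_rw [← sum_mul, sum_Icc_neg_one_pow_card (SimpleGraph.subset_closedNbhdFinset _),
          ite_mul, zero_mul, sum_ite, sum_const_zero, add_zero, ← neg_pow]
    _ = ∑ T ∈ ({∅, univ} : Finset (Finset V)), (-X) ^ #T := by
        congr 1
        ext T
        simp [hConn.preconnected.closedNbhdFinset_eq_self_iff]
    _ = 1 + (-X) ^ Fintype.card V := by
        rw [sum_pair (univ_nonempty_iff.2 hConn.nonempty).ne_empty.symm]
        simp

/-- for a connected graph, the alternating sum of the domination
polynomials of the vertex-induced subgraphs equals `1 + (-x)^|V|`. -/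
theorem stmt_8 [Fintype V] [DecidableEq V] (G : SimpleGraph V) (hConn : G.Connected) :
    ∑ W ∈ (Finset.univ : Finset V).powerset,
        (-1 : Polynomial ℤ) ^ W.card * domPoly (G.induce (↑W : Set V))
      = 1 + (-X) ^ Fintype.card V :=
  stmt_8_general G hConn
end

section
/- Let G = (V,E) be a graph and v ∈ V. Then D(G,x) = D(G−v, x) + ∑_{W : v ∈ W ⊆ V, G[W] connected} (x^{|W|} + (−1)^{|W|}) · D(G − N[W], x), where G−v is the induced subgraph on V∖{v} and G − N[W] is the induced subgraph on V ∖ N[W]. -/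
/-!
Split the dominating sets `T` of `G` according to whether `v ∈ T`. Those with `v ∉ T` are the
dominating sets of `G - v`, except that `D(G - v)` also counts the sets `T` with
`N[T] = V ∖ {v}`. A dominating set `T ∋ v` splits uniquely as `W ∪ S`, where `W` is the component
of `v` in `G[T]` and `S` dominates `G - N[W]`; this gives the `x^|W|` terms. For the `(-1)^|W|`
terms exchange the two sums: for fixed `S` and `A = V ∖ N[S]`, the alternating sum of `(-1)^|W|`
over connected `W ∋ v` with `W ⊆ A ⊆ N[W]` is `-1` if `A = {v}` and `0` otherwise
(inclusion–exclusion over `A ∖ N[W]` and the same component decomposition inside `A`), so these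
terms cancel exactly the exceptional sets.
-/

open Finset Polynomial

variable {V : Type*}

open scoped Classical

namespace Finset

variable {α R : Type*} [DecidableEq α] [CommRing R]

lemma sum_powerset_neg_one_pow_card_eq_ite (A : Finset α) :
    ∑ T ∈ A.powerset, (-1 : R) ^ #T = if A = ∅ then 1 else 0 := by
  have h := congrArg (Int.cast : ℤ → R) (sum_powerset_neg_one_pow_card (x := A))
  simpa only [Int.cast_sum, Int.cast_pow, Int.cast_neg, Int.cast_one, apply_ite, Int.cast_zero]
    using h

lemma sum_filter_mem_powerset_neg_one_pow_card (A : Finset α) (a : α) :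
    ∑ T ∈ A.powerset with a ∈ T, (-1 : R) ^ #T = if A = {a} then -1 else 0 := by
  by_cases ha : a ∈ A
  · have hA : A = {a} ↔ A.erase a = ∅ := by
      rw [erase_eq_empty_iff, or_iff_right (ne_empty_of_mem ha)]
    conv_lhs => rw [← insert_erase ha]
    have ha' (T : Finset α) (hT : T ∈ (A.erase a).powerset) : a ∉ T :=
      fun haT => notMem_erase a A (mem_powerset.1 hT haT)
    rw [sum_filter, sum_powerset_insert (notMem_erase a A), if_congr hA rfl rfl,
      sum_eq_zero fun T hT => if_neg (ha' T hT), zero_add]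
    calc _ = ∑ T ∈ (A.erase a).powerset, -(-1 : R) ^ #T := sum_congr rfl fun T hT => by
            rw [if_pos (mem_insert_self a T), card_insert_of_notMem (ha' T hT), pow_succ,
              mul_neg_one]
      _ = _ := by rw [sum_neg_distrib, sum_powerset_neg_one_pow_card_eq_ite]; split_ifs <;> simp
  · rw [if_neg (by rintro rfl; exact ha (mem_singleton_self a))]
    refine sum_eq_zero fun T hT => absurd ?_ ha
    obtain ⟨hTA, haT⟩ := mem_filter.1 hT
    exact mem_powerset.1 hTA haT

end Finset

namespace SimpleGraph

section Neighbourhood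

variable [Fintype V] (G : SimpleGraph V)

noncomputable def closedNbhd (W : Finset V) : Finset V :=
  univ.filter fun x => x ∈ W ∨ ∃ u ∈ W, G.Adj u x

variable {G}

@[simp]
lemma mem_closedNbhd {W : Finset V} {x : V} : x ∈ G.closedNbhd W ↔ x ∈ W ∨ ∃ u ∈ W, G.Adj u x := by
  simp [closedNbhd]

lemma subset_closedNbhd (W : Finset V) : W ⊆ G.closedNbhd W :=
  fun _ hx => mem_closedNbhd.2 (.inl hx)

lemma closedNbhd_union [DecidableEq V] (A B : Finset V) :
    G.closedNbhd (A ∪ B) = G.closedNbhd A ∪ G.closedNbhd B := by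
  ext x
  simp only [mem_closedNbhd, mem_union]
  grind

lemma disjoint_closedNbhd_comm {S W : Finset V} :
    Disjoint S (G.closedNbhd W) ↔ Disjoint W (G.closedNbhd S) := by
  suffices ∀ {S W : Finset V}, Disjoint S (G.closedNbhd W) → Disjoint W (G.closedNbhd S) from
    ⟨this, this⟩
  intro S W h
  refine Finset.disjoint_left.2 fun w hw hwS => ?_
  rcases mem_closedNbhd.1 hwS with hw' | ⟨u, hu, hadj⟩
  · exact Finset.disjoint_left.1 h hw' (subset_closedNbhd W hw)
  · exact Finset.disjoint_left.1 h hu (mem_closedNbhd.2 (.inr ⟨w, hw, hadj.symm⟩))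

lemma dominates_iff_closedNbhd_eq_univ {T : Finset V} :
    dominates G T ↔ G.closedNbhd T = univ := by
  simp [dominates, eq_univ_iff_forall]

lemma dominates_union_iff [DecidableEq V] {A B : Finset V} :
    dominates G (A ∪ B) ↔ (G.closedNbhd A)ᶜ ⊆ G.closedNbhd B := by
  rw [dominates_iff_closedNbhd_eq_univ, closedNbhd_union, ← codisjoint_iff_compl_le_right,
    codisjoint_iff, sup_eq_union, top_eq_univ]

end Neighbourhood

section Component

variable (G : SimpleGraph V)

def AdjWithin (T : Finset V) (a b : V) : Prop := G.Adj a b ∧ a ∈ T ∧ b ∈ T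

noncomputable def componentOf (T : Finset V) (v : V) : Finset V :=
  T.filter (Relation.ReflTransGen (G.AdjWithin T) v)

variable {G} {v : V}

lemma mem_componentOf {T : Finset V} {u : V} :
    u ∈ G.componentOf T v ↔ u ∈ T ∧ Relation.ReflTransGen (G.AdjWithin T) v u :=
  mem_filter

lemma componentOf_subset (T : Finset V) (v : V) : G.componentOf T v ⊆ T := filter_subset _ _

lemma self_mem_componentOf {T : Finset V} (hv : v ∈ T) : v ∈ G.componentOf T v :=
  mem_componentOf.2 ⟨hv, .refl⟩

lemma induce_connected_iff_forall_reflTransGen {W : Finset V} (hv : v ∈ W) :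
    (G.induce (W : Set V)).Connected ↔ ∀ u ∈ W, Relation.ReflTransGen (G.AdjWithin W) v u := by
  have reach_iff (a b : (W : Set V)) :
      (G.induce (W : Set V)).Reachable a b ↔ Relation.ReflTransGen (G.AdjWithin W) a b := by
    rw [reachable_iff_reflTransGen]
    refine ⟨fun h => h.lift Subtype.val fun x y hxy => ⟨hxy, x.2, y.2⟩, fun h => ?_⟩
    obtain ⟨b, hb⟩ := b
    change Relation.ReflTransGen _ _ b at h
    induction h with
    | refl => exact .refl
    | tail _ hcd ih => exact (ih hcd.2.1).tail hcd.1
  constructor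
  · exact fun hc u hu => (reach_iff ⟨v, hv⟩ ⟨u, hu⟩).1 (hc.preconnected _ _)
  · exact fun h => (connected_iff_exists_forall_reachable _).2
      ⟨⟨v, hv⟩, fun u => (reach_iff _ _).2 (h u u.2)⟩

lemma reflTransGen_adjWithin_componentOf {T : Finset V} {u : V}
    (h : Relation.ReflTransGen (G.AdjWithin T) v u) :
    Relation.ReflTransGen (G.AdjWithin (G.componentOf T v)) v u := by
  induction h with
  | refl => exact .refl
  | @tail b c hvb hbc ih =>
    exact ih.tail
      ⟨hbc.1, mem_componentOf.2 ⟨hbc.2.1, hvb⟩, mem_componentOf.2 ⟨hbc.2.2, hvb.tail hbc⟩⟩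

lemma induce_componentOf_connected {T : Finset V} (hv : v ∈ T) :
    (G.induce (G.componentOf T v : Set V)).Connected :=
  (induce_connected_iff_forall_reflTransGen (self_mem_componentOf hv)).2 fun _ hu =>
    reflTransGen_adjWithin_componentOf (mem_componentOf.1 hu).2

lemma pow_card_componentOf_mul_pow_card_sdiff [DecidableEq V] {M : Type*} [Monoid M] (a : M)
    (T : Finset V) (v : V) : a ^ #(G.componentOf T v) * a ^ #(T \ G.componentOf T v) = a ^ #T := by
  rw [← pow_add, add_comm, card_sdiff_add_card_eq_card (componentOf_subset T v)]

variable [Fintype V]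

lemma disjoint_sdiff_componentOf_closedNbhd [DecidableEq V] (T : Finset V) (v : V) :
    Disjoint (T \ G.componentOf T v) (G.closedNbhd (G.componentOf T v)) := by
  refine Finset.disjoint_left.2 fun x hx hxN => (mem_sdiff.1 hx).2 ?_
  rcases mem_closedNbhd.1 hxN with hxC | ⟨u, huC, hux⟩
  · exact hxC
  · obtain ⟨huT, hvu⟩ := mem_componentOf.1 huC
    exact mem_componentOf.2 ⟨(mem_sdiff.1 hx).1, hvu.tail ⟨hux, huT, (mem_sdiff.1 hx).1⟩⟩

lemma componentOf_union_eq [DecidableEq V] {W S : Finset V} (hv : v ∈ W)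
    (hW : (G.induce (W : Set V)).Connected) (hS : Disjoint S (G.closedNbhd W)) :
    G.componentOf (W ∪ S) v = W := by
  refine Subset.antisymm (fun u hu => ?_) fun u hu => mem_componentOf.2 ⟨mem_union_left _ hu, ?_⟩
  · -- a path from `v` inside `W ∪ S` never leaves `W`, since no vertex of `S` is adjacent to `W`
    obtain ⟨-, hvu⟩ := mem_componentOf.1 hu
    clear hu
    induction hvu with
    | refl => exact hv
    | @tail b c _ hbc hb =>
      refine (mem_union.1 hbc.2.2).resolve_right fun hcS => ?_
      exact Finset.disjoint_left.1 hS hcS (mem_closedNbhd.2 (.inr ⟨b, hb, hbc.1⟩))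
  · exact Relation.ReflTransGen.mono
      (fun _ _ hab => ⟨hab.1, mem_union_left _ hab.2.1, mem_union_left _ hab.2.2⟩) _ _
      ((induce_connected_iff_forall_reflTransGen hv).1 hW u hu)

/-- Splitting a vertex set `T ∋ v` into the component `W` of `v` in `G[T]` and the rest `S`
is a bijection onto the pairs with `W` connected, `v ∈ W` and `S` outside `N[W]`. -/
lemma sum_connected_sum_powerset_sdiff_closedNbhd [DecidableEq V] {M : Type*} [AddCommMonoid M]
    (U : Finset V) (v : V) (f : Finset V → Finset V → M) :
    ∑ W ∈ U.powerset.filter fun W : Finset V => v ∈ W ∧ (G.induce (↑W : Set V)).Connected,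
        ∑ S ∈ (U \ G.closedNbhd W).powerset, f W S
      = ∑ T ∈ U.powerset with v ∈ T, f (G.componentOf T v) (T \ G.componentOf T v) := by
  rw [sum_sigma']
  refine sum_bij' (fun p _ => p.1 ∪ p.2) (fun T _ => ⟨G.componentOf T v, T \ G.componentOf T v⟩)
    ?_ ?_ ?_ (fun T _ => union_sdiff_of_subset (componentOf_subset T v)) ?_
  · rintro ⟨W, S⟩ hWS
    simp only [mem_sigma, mem_filter, mem_powerset, subset_sdiff] at hWS ⊢
    exact ⟨union_subset hWS.1.1 hWS.2.1, mem_union_left _ hWS.1.2.1⟩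
  · intro T hT
    simp only [mem_sigma, mem_filter, mem_powerset, subset_sdiff] at hT ⊢
    exact ⟨⟨(componentOf_subset T v).trans hT.1, self_mem_componentOf hT.2,
      induce_componentOf_connected hT.2⟩,
      sdiff_subset.trans hT.1, disjoint_sdiff_componentOf_closedNbhd T v⟩
  all_goals
    rintro ⟨W, S⟩ hWS
    simp only [mem_sigma, mem_filter, mem_powerset, subset_sdiff] at hWS
    obtain ⟨⟨-, hvW, hW⟩, -, hS⟩ := hWS
    have hcomp := componentOf_union_eq hvW hW hS
    have hrest : (W ∪ S) \ W = S :=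
      union_sdiff_cancel_left (hS.mono_right (subset_closedNbhd W)).symm
    simp only [hcomp, hrest]

lemma sum_connected_closedNbhd_superset_neg_one_pow [DecidableEq V] {R : Type*} [CommRing R]
    (A : Finset V) (v : V) :
    ∑ W ∈ A.powerset.filter fun W : Finset V =>
        v ∈ W ∧ (G.induce (↑W : Set V)).Connected ∧ A ⊆ G.closedNbhd W, (-1 : R) ^ #W
      = if A = {v} then -1 else 0 := by
  calc _ = ∑ W ∈ A.powerset.filter fun W : Finset V => v ∈ W ∧ (G.induce (↑W : Set V)).Connected,
          ∑ S ∈ (A \ G.closedNbhd W).powerset, (-1 : R) ^ #W * (-1) ^ #S := by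
        simp_rw [← mul_sum, sum_powerset_neg_one_pow_card_eq_ite, sdiff_eq_empty_iff_subset,
          mul_ite, mul_one, mul_zero, ← sum_filter, filter_filter, and_assoc]
    _ = ∑ T ∈ A.powerset with v ∈ T, (-1 : R) ^ #T := by
        rw [sum_connected_sum_powerset_sdiff_closedNbhd]
        exact sum_congr rfl fun T _ => pow_card_componentOf_mul_pow_card_sdiff _ T v
    _ = _ := sum_filter_mem_powerset_neg_one_pow_card A v

end Component

section DominationPolynomial

variable [Fintype V] [DecidableEq V] (G : SimpleGraph V)

/-- The domination polynomial of `G[B]`: for `T ⊆ B`, `T` dominates `G[B]` iff `B ⊆ N[T]`. -/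
noncomputable def domPolyOn (B : Finset V) : ℤ[X] :=
  ∑ T ∈ B.powerset with B ⊆ G.closedNbhd T, X ^ #T

lemma domPoly_induce (s : Set V) [Fintype s] (B : Finset V) (hB : (B : Set V) = s) :
    domPoly (G.induce s) = G.domPolyOn B := by
  subst hB
  unfold domPoly domPolyOn dominates
  refine sum_nbij' (fun W => W.map (Function.Embedding.subtype _)) (fun T => T.subtype (· ∈ B))
    ?_ ?_ ?_ ?_ fun W _ => by rw [card_map]
  · intro W hW
    simp only [mem_filter, mem_powerset] at hW ⊢
    refine ⟨fun x hx => ?_, fun x hx => ?_⟩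
    · obtain ⟨y, -, rfl⟩ := mem_map.1 hx
      exact y.2
    · rcases hW.2 ⟨x, hx⟩ with h | ⟨u, hu, hadj⟩
      · exact mem_closedNbhd.2 (.inl (mem_map_of_mem _ h))
      · exact mem_closedNbhd.2 (.inr ⟨u, mem_map_of_mem _ hu, hadj⟩)
  · intro T hT
    simp only [mem_filter, mem_powerset] at hT ⊢
    refine ⟨subset_univ _, fun x => ?_⟩
    rcases mem_closedNbhd.1 (hT.2 x.2) with h | ⟨u, hu, hadj⟩
    · exact .inl (mem_subtype.2 h)
    · exact .inr ⟨⟨u, hT.1 hu⟩, mem_subtype.2 hu, hadj⟩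
  · intro W _
    ext x
    simp
  · intro T hT
    simp only [mem_filter, mem_powerset] at hT
    exact (subtype_map _).trans (filter_true_of_mem fun x hx => hT.1 hx)

lemma domPolyOn_compl_singleton (v : V) :
    G.domPolyOn {v}ᶜ = ∑ T ∈ univ.powerset with dominates G T ∧ v ∉ T, X ^ #T
      + ∑ T ∈ univ.powerset with (G.closedNbhd T)ᶜ = {v}, X ^ #T := by
  rw [domPolyOn, ← sum_filter_add_sum_filter_not _ fun T => v ∈ G.closedNbhd T]
  congr 1 <;> refine sum_congr (Finset.ext fun T => ?_) fun _ _ => rfl <;>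
    simp only [mem_filter, mem_powerset,
      dominates_iff_closedNbhd_eq_univ, Finset.ext_iff, subset_iff, mem_compl, mem_singleton,
      mem_univ, iff_true]
  · grind
  · have := subset_closedNbhd (G := G) T
    grind

lemma sum_X_pow_mul_domPolyOn_compl_closedNbhd (v : V) :
    ∑ W ∈ univ.powerset.filter fun W : Finset V => v ∈ W ∧ (G.induce (↑W : Set V)).Connected,
        X ^ #W * G.domPolyOn (G.closedNbhd W)ᶜ
      = ∑ T ∈ univ.powerset with dominates G T ∧ v ∈ T, X ^ #T := by
  calc _ = ∑ W ∈ univ.powerset.filter fun W : Finset V =>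
          v ∈ W ∧ (G.induce (↑W : Set V)).Connected, ∑ S ∈ (univ \ G.closedNbhd W).powerset,
          if dominates G (W ∪ S) then X ^ #W * X ^ #S else 0 := by
        refine sum_congr rfl fun W _ => ?_
        simp_rw [domPolyOn, mul_sum, sum_filter, dominates_union_iff, compl_eq_univ_sdiff]
    _ = ∑ T ∈ univ.powerset with v ∈ T, if dominates G T then X ^ #T else 0 := by
        rw [sum_connected_sum_powerset_sdiff_closedNbhd]
        refine sum_congr rfl fun T _ => ?_
        rw [union_sdiff_of_subset (componentOf_subset T v), pow_card_componentOf_mul_pow_card_sdiff]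
    _ = _ := by
        rw [← sum_filter, filter_filter]
        exact sum_congr (filter_congr fun _ _ => and_comm) fun _ _ => rfl

lemma sum_neg_one_pow_mul_domPolyOn_compl_closedNbhd (v : V) :
    ∑ W ∈ univ.powerset.filter fun W : Finset V => v ∈ W ∧ (G.induce (↑W : Set V)).Connected,
        (-1) ^ #W * G.domPolyOn (G.closedNbhd W)ᶜ
      = -∑ T ∈ univ.powerset with (G.closedNbhd T)ᶜ = {v}, X ^ #T := by
  calc _ = ∑ W ∈ univ.powerset.filter fun W : Finset V =>
          v ∈ W ∧ (G.induce (↑W : Set V)).Connected,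
          ∑ S ∈ (G.closedNbhd W)ᶜ.powerset with (G.closedNbhd W)ᶜ ⊆ G.closedNbhd S,
          (-1) ^ #W * X ^ #S := by
        simp_rw [domPolyOn, mul_sum]
    _ = ∑ S ∈ univ.powerset, ∑ W ∈ (G.closedNbhd S)ᶜ.powerset.filter fun W : Finset V =>
          v ∈ W ∧ (G.induce (↑W : Set V)).Connected ∧ (G.closedNbhd S)ᶜ ⊆ G.closedNbhd W,
          (-1) ^ #W * X ^ #S := by
        refine sum_comm' fun W S => ?_
        have hdisj : S ⊆ (G.closedNbhd W)ᶜ ↔ W ⊆ (G.closedNbhd S)ᶜ := by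
          simp only [subset_compl_iff_disjoint_right, disjoint_closedNbhd_comm]
        have hcompl : (G.closedNbhd W)ᶜ ⊆ G.closedNbhd S ↔ (G.closedNbhd S)ᶜ ⊆ G.closedNbhd W :=
          compl_le_iff_compl_le
        simp only [mem_filter, mem_powerset, subset_univ, true_and, and_true, hdisj, hcompl]
        tauto
    _ = ∑ S ∈ univ.powerset, if (G.closedNbhd S)ᶜ = {v} then -X ^ #S else 0 := by
        refine sum_congr rfl fun S _ => ?_
        rw [← sum_mul, sum_connected_closedNbhd_superset_neg_one_pow, ite_mul, neg_one_mul,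
          zero_mul]
    _ = _ := by rw [← sum_filter, sum_neg_distrib]

end DominationPolynomial

end SimpleGraph

open SimpleGraph in
open scoped Classical in
/-- recursion
`D(G,x) = D(G-v,x) + ∑_{v ∈ W, G[W] connected} (x^|W| + (-1)^|W|) D(G - N[W], x)`. -/
theorem stmt_12 [Fintype V] [DecidableEq V] (G : SimpleGraph V) (v : V) :
    domPoly G
      = domPoly (G.induce {u : V | u ≠ v})
        + ∑ W ∈ (Finset.univ : Finset V).powerset.filter
            (fun W : Finset V => v ∈ W ∧ (G.induce (↑W : Set V)).Connected),
            ((X : Polynomial ℤ) ^ W.card + (-1) ^ W.card) *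
              domPoly (G.induce {x : V | ¬ (x ∈ W ∨ ∃ u ∈ W, G.Adj u x)}) := by
  have hG : domPoly G = ∑ T ∈ univ.powerset with dominates G T ∧ v ∈ T, X ^ #T
      + ∑ T ∈ univ.powerset with dominates G T ∧ v ∉ T, X ^ #T := by
    rw [domPoly, ← sum_filter_add_sum_filter_not _ fun T => v ∈ T, filter_filter, filter_filter]
  have hGv : domPoly (G.induce {u : V | u ≠ v}) = G.domPolyOn {v}ᶜ :=
    domPoly_induce G _ _ (by ext; simp)
  have hGW (W : Finset V) : domPoly (G.induce {x : V | ¬ (x ∈ W ∨ ∃ u ∈ W, G.Adj u x)})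
      = G.domPolyOn (G.closedNbhd W)ᶜ :=
    domPoly_induce G _ _ (by ext; simp)
  simp_rw [hGW, add_mul, sum_add_distrib, sum_X_pow_mul_domPolyOn_compl_closedNbhd,
    sum_neg_one_pow_mul_domPolyOn_compl_closedNbhd, hG, hGv, domPolyOn_compl_singleton]
  abel
end
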